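/- arXiv:2411.18094 — 2 statements merged into one kernel-verified Lean document; each statement's English description precedes it below -/
import Mathlib

section
/- If the domain of a write buffer μ is contained in the set of array addresses of a layout w (i.e., no buffered write targets a procedure address), then the committed memory commit(μ, w ∘ σ) of a buffer over the memory induced by layout w and store σ equals w ∘ σ' for some store σ' that agrees with σ on all procedure identifiers. -/
/-- The block of addresses an identifier occupies under a layout:
    arrays occupy contiguous ranges, procedures a single address. -/
def blockOf {ArId FnId : Type*} (size : ArId → ℕ) (w : ArId ⊕ FnId → ℕ) :
    ArId ⊕ FnId → Set ℕ
  | Sum.inl a => { p | ∃ k, k < size a ∧ p = w (Sum.inl a) + k }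
  | Sum.inr f => {w (Sum.inr f)}

/-- Layouts assign pairwise-disjoint address blocks to identifiers. -/
def GoodLayout {ArId FnId : Type*} (size : ArId → ℕ) (w : ArId ⊕ FnId → ℕ) : Prop :=
  ∀ i j, i ≠ j → Disjoint (blockOf size w i) (blockOf size w j)

/-- The memory induced by a layout `w` and a store (`arr`, `proc`). -/
noncomputable def inducedMem {ArId FnId Val Cmd : Type*}
    (size : ArId → ℕ) (w : ArId ⊕ FnId → ℕ)
    (arr : ArId → ℕ → Val) (proc : FnId → Cmd) (p : ℕ) : Option (Val ⊕ Cmd) :=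
  open Classical in
  if h : ∃ f : FnId, p = w (Sum.inr f) then some (Sum.inr (proc h.choose))
  else if h' : ∃ a : ArId, ∃ k : ℕ, k < size a ∧ p = w (Sum.inl a) + k then
    some (Sum.inl (arr h'.choose h'.choose_spec.choose))
  else none

/-- Committing a write buffer (of plain values) into a memory. -/
def commitO {Val Cmd : Type*} :
    List (ℕ × Val) → (ℕ → Option (Val ⊕ Cmd)) → (ℕ → Option (Val ⊕ Cmd))
  | [], m => m
  | (a, v) :: μ, m => Function.update (commitO μ m) a (some (Sum.inl v))

theorem GoodLayout.ne_proc {ArId FnId : Type*} {size : ArId → ℕ} {w : ArId ⊕ FnId → ℕ}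
    (hw : GoodLayout size w) {p : ℕ}
    (hp : ∃ a : ArId, ∃ k : ℕ, k < size a ∧ p = w (Sum.inl a) + k) (f : FnId) :
    p ≠ w (Sum.inr f) := by
  obtain ⟨a, k, hk, rfl⟩ := hp
  exact Set.disjoint_left.mp (hw (Sum.inl a) (Sum.inr f) Sum.inl_ne_inr) ⟨k, hk, rfl⟩

/-- Overwriting every array cell laid out at `p`, rather than a chosen one, means no
    disjointness between arrays is needed. -/
theorem update_inducedMem_s3 {ArId FnId Val Cmd : Type*} {size : ArId → ℕ} {w : ArId ⊕ FnId → ℕ}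
    {arr : ArId → ℕ → Val} {proc : FnId → Cmd} {p : ℕ} (v : Val)
    (hp : ∃ a : ArId, ∃ k : ℕ, k < size a ∧ p = w (Sum.inl a) + k)
    (hnf : ∀ f : FnId, p ≠ w (Sum.inr f)) :
    Function.update (inducedMem size w arr proc) p (some (Sum.inl v)) =
      inducedMem size w (fun b j => if w (Sum.inl b) + j = p ∧ j < size b then v else arr b j)
        proc := by
  funext q
  by_cases hq : q = p
  · subst hq
    have hf : ¬ ∃ f : FnId, q = w (Sum.inr f) := fun ⟨f, hf⟩ => hnf f hf
    obtain ⟨hk, hqa⟩ := hp.choose_spec.choose_spec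
    rw [Function.update_self, inducedMem, dif_neg hf, dif_pos hp, if_pos ⟨hqa.symm, hk⟩]
  · rw [Function.update_of_ne hq]
    unfold inducedMem
    beta_reduce
    split_ifs with hf ha hqa
    · rfl
    · exact absurd (ha.choose_spec.choose_spec.2.trans hqa.1) hq
    · rfl
    · rfl

/-- If the domain of a write buffer is contained in the array addresses of layout `w`,
    then the committed memory equals `w ∘ σ'` for some store `σ'` agreeing with `σ`
    on all procedure identifiers. -/
theorem commit_inducedMem {ArId FnId Val Cmd : Type*}
    (size : ArId → ℕ) (w : ArId ⊕ FnId → ℕ) (hw : GoodLayout size w)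
    (arr : ArId → ℕ → Val) (proc : FnId → Cmd)
    (μ : List (ℕ × Val))
    (hdom : ∀ p ∈ μ.map Prod.fst, ∃ a : ArId, ∃ k : ℕ, k < size a ∧ p = w (Sum.inl a) + k) :
    ∃ arr' : ArId → ℕ → Val,
      commitO μ (inducedMem size w arr proc) = inducedMem size w arr' proc := by
  induction μ with
  | nil => exact ⟨arr, rfl⟩
  | cons pv μ ih =>
    obtain ⟨p, v⟩ := pv
    obtain ⟨arr', harr'⟩ := ih fun q hq => hdom q (List.mem_cons_of_mem _ hq)
    have hp := hdom p List.mem_cons_self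
    exact ⟨_, by rw [commitO, harr', update_inducedMem_s3 v hp (hw.ne_proc hp)]⟩
end

section
/- Let a be an address, a an array identifier, σ a store, w a layout, and 0 ≤ i < size(a) with p = w(a) + i. Then updating the induced memory w ∘ σ at address p with value v equals the memory induced by w and the store σ updated at the array cell (a, i): (w ∘ σ)[p ↦ v] = w ∘ (σ[(a,i) ↦ v]). -/
/-! Since the layout is good, the address `w(a)+i` is neither a procedure address nor inside
any other array cell, so it shows exactly `σ(a)[i]`; every other address reads only cells other
than `(a,i)`, which the store update leaves alone. -/

namespace GoodLayout

variable {ArId FnId : Type*} {size : ArId → ℕ} {w : ArId ⊕ FnId → ℕ}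

theorem array_addr_ne_proc_addr (hw : GoodLayout size w) {a : ArId} {i : ℕ}
    (hi : i < size a) (f : FnId) : w (Sum.inl a) + i ≠ w (Sum.inr f) := fun h =>
  Set.disjoint_left.mp (hw _ _ Sum.inl_ne_inr) (⟨i, hi, rfl⟩ : _ ∈ blockOf size w (Sum.inl a)) h

theorem array_addr_injective (hw : GoodLayout size w) {a b : ArId} {i k : ℕ}
    (hi : i < size a) (hk : k < size b) (h : w (Sum.inl b) + k = w (Sum.inl a) + i) :
    b = a ∧ k = i := by
  have hba : b = a := by
    by_contra hne
    exact Set.disjoint_left.mp (hw (Sum.inl b) (Sum.inl a) (by simpa using hne))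
      ⟨k, hk, rfl⟩ ⟨i, hi, h⟩
  subst hba
  exact ⟨rfl, by omega⟩

end GoodLayout

section inducedMem

variable {ArId FnId Val Cmd : Type*} {size : ArId → ℕ} {w : ArId ⊕ FnId → ℕ}
  {arr : ArId → ℕ → Val} {proc : FnId → Cmd}

theorem inducedMem_array_addr (hw : GoodLayout size w) {a : ArId} {i : ℕ} (hi : i < size a) :
    inducedMem size w arr proc (w (Sum.inl a) + i) = some (Sum.inl (arr a i)) := by
  have hcell : ∃ b k, k < size b ∧ w (Sum.inl a) + i = w (Sum.inl b) + k := ⟨a, i, hi, rfl⟩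
  rw [inducedMem, dif_neg (fun ⟨f, hf⟩ => hw.array_addr_ne_proc_addr hi f hf), dif_pos hcell]
  obtain ⟨hk, heq⟩ := hcell.choose_spec.choose_spec
  obtain ⟨hb, hki⟩ := hw.array_addr_injective hi hk heq.symm
  rw [hki, hb]

theorem inducedMem_congr_arr {arr' : ArId → ℕ → Val} {q : ℕ}
    (h : ∀ b k, k < size b → q = w (Sum.inl b) + k → arr b k = arr' b k) :
    inducedMem size w arr proc q = inducedMem size w arr' proc q := by
  unfold inducedMem
  split_ifs with _ hcell
  · rfl
  · obtain ⟨hk, hq⟩ := hcell.choose_spec.choose_spec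
    rw [h _ _ hk hq]
  · rfl

end inducedMem

/-- Updating the induced memory `w ∘ σ` at address `p = w(a)+i` (with `i < size a`)
    equals the memory induced by `w` and the store updated at the array cell `(a,i)`. -/
theorem update_inducedMem {ArId FnId Val Cmd : Type*} [DecidableEq ArId]
    (size : ArId → ℕ) (w : ArId ⊕ FnId → ℕ) (hw : GoodLayout size w)
    (arr : ArId → ℕ → Val) (proc : FnId → Cmd)
    (a : ArId) (i : ℕ) (hi : i < size a) (v : Val) :
    Function.update (inducedMem size w arr proc) (w (Sum.inl a) + i) (some (Sum.inl v))
      = inducedMem size w (Function.update arr a (Function.update (arr a) i v)) proc := by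
  funext q
  by_cases hq : q = w (Sum.inl a) + i
  · subst hq
    rw [Function.update_self, inducedMem_array_addr hw hi]
    simp
  · rw [Function.update_of_ne hq]
    refine inducedMem_congr_arr fun b k _ hqb => ?_
    by_cases hb : b = a
    · subst hb
      have hki : k ≠ i := fun hki => hq (hki ▸ hqb)
      simp [Function.update_of_ne hki]
    · simp [Function.update_of_ne hb]
end
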